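/- arXiv:2306.02792 — 5 statements merged into one kernel-verified Lean document; each statement's English description precedes it below -/
import Mathlib

section
/- Let f : {0,1}^m → {0,1}^n be cotransverse and let δ : {0,1}^n → {0,1}^p be a composite of coface maps (equivalently, a map of the box category). If δ∘f is a composite of coface maps, then f is a composite of coface maps. -/
open scoped ENNReal

open Classical in
noncomputable def dCube {n : ℕ} (x y : Fin n → Bool) : ℝ≥0∞ :=
  if x ≤ y then ((Finset.univ.filter fun i => x i ≠ y i).card : ℝ≥0∞) else ⊤

/-- Maps between binary cubes. -/
abbrev CubeMap (m n : ℕ) := (Fin m → Bool) → (Fin n → Bool)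

/-- Cotransverse maps: strictly increasing poset maps preserving `d̄₁`-distance `1`. -/
def Cotransverse {m n : ℕ} (f : CubeMap m n) : Prop :=
  StrictMono f ∧ ∀ x y, dCube x y = 1 → dCube (f x) (f y) = 1

/-- Membership in the box category `□`: composites of coface maps. -/
inductive IsBox : ∀ {m n : ℕ}, CubeMap m n → Prop
  | id (n : ℕ) : IsBox (@id (Fin n → Bool))
  | coface {n : ℕ} (i : Fin (n + 1)) (a : Bool) :
      IsBox (fun x : Fin n → Bool => (i.insertNth a x : Fin (n + 1) → Bool))
  | comp {m n p : ℕ} {f : CubeMap m n} {g : CubeMap n p} :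
      IsBox f → IsBox g → IsBox (g ∘ f)

/-- Normal-form data for a box map: every output coordinate is either a constant
or an input coordinate, input coordinates appearing in order, each exactly once. -/
def BoxData {m n : ℕ} (f : CubeMap m n) (g : Fin n → Bool ⊕ Fin m) : Prop :=
  (∀ x j, f x j = Sum.elim id x (g j)) ∧
  (∀ j j' i i', g j = Sum.inr i → g j' = Sum.inr i' → (j < j' ↔ i < i')) ∧
  (∀ i, ∃ j, g j = Sum.inr i)

theorem boxData_inj {m n : ℕ} {g : Fin n → Bool ⊕ Fin m}
    (hm : ∀ j j' i i', g j = Sum.inr i → g j' = Sum.inr i' → (j < j' ↔ i < i'))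
    {j j' : Fin n} {k : Fin m} (h : g j = Sum.inr k) (h' : g j' = Sum.inr k) : j = j' := by
  rcases lt_trichotomy j j' with hlt | he | hlt
  · exact absurd ((hm j j' k k h h').mp hlt) (lt_irrefl k)
  · exact he
  · exact absurd ((hm j' j k k h' h).mp hlt) (lt_irrefl k)

theorem isBox_boxData {m n : ℕ} {f : CubeMap m n} (h : IsBox f) : ∃ g, BoxData f g := by
  induction h with
  | id n =>
    exact ⟨Sum.inr, fun x j => rfl,
      fun j j' i i' hj hj' => by
        simp only [Sum.inr.injEq] at hj hj'; subst hj; subst hj'; rfl,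
      fun i => ⟨i, rfl⟩⟩
  | coface i a =>
    classical
    refine ⟨fun j => if h : j = i then Sum.inl a
      else Sum.inr (Classical.choose (Fin.exists_succAbove_eq h)), ?_, ?_, ?_⟩
    · intro x j
      beta_reduce
      by_cases h : j = i
      · subst h; rw [dif_pos rfl, Fin.insertNth_apply_same]; rfl
      · rw [dif_neg h]
        have hs := Classical.choose_spec (Fin.exists_succAbove_eq h)
        conv_lhs => rw [← hs]
        rw [Fin.insertNth_apply_succAbove]; rfl
    · intro j j' k k' hj hj'
      beta_reduce at hj hj'
      by_cases h : j = i
      · rw [dif_pos h] at hj; exact absurd hj (by simp)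
      by_cases h' : j' = i
      · rw [dif_pos h'] at hj'; exact absurd hj' (by simp)
      rw [dif_neg h] at hj; rw [dif_neg h'] at hj'
      have hs := Classical.choose_spec (Fin.exists_succAbove_eq h)
      have hs' := Classical.choose_spec (Fin.exists_succAbove_eq h')
      rw [Sum.inr.injEq] at hj hj'
      rw [← hs, ← hs', hj, hj', Fin.succAbove_lt_succAbove_iff]
    · intro k
      refine ⟨i.succAbove k, ?_⟩
      beta_reduce
      have hne : i.succAbove k ≠ i := Fin.succAbove_ne i k
      rw [dif_neg hne, Sum.inr.injEq]
      have hs := Classical.choose_spec (Fin.exists_succAbove_eq hne)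
      exact Fin.succAbove_right_injective hs
  | @comp m n p f g hf hg ihf ihg =>
    obtain ⟨gf, hfe, hfm, hfs⟩ := ihf
    obtain ⟨gg, hge, hgm, hgs⟩ := ihg
    refine ⟨fun j => Sum.elim Sum.inl gf (gg j), ?_, ?_, ?_⟩
    · intro x j
      show (g ∘ f) x j = Sum.elim id x (Sum.elim Sum.inl gf (gg j))
      rw [Function.comp_apply, hge (f x) j]
      rcases h : gg j with b | k
      · rfl
      · simp only [Sum.elim_inr]
        exact hfe x k
    · intro j j' i i' hj hj'
      beta_reduce at hj hj'
      rcases h : gg j with b | k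
      · rw [h] at hj; exact absurd hj (by simp)
      rcases h' : gg j' with b' | k'
      · rw [h'] at hj'; exact absurd hj' (by simp)
      rw [h] at hj; rw [h'] at hj'
      simp only [Sum.elim_inr] at hj hj'
      exact (hgm j j' k k' h h').trans (hfm k k' i i' hj hj')
    · intro i
      obtain ⟨k, hk⟩ := hfs i
      obtain ⟨j, hj⟩ := hgs k
      exact ⟨j, by beta_reduce; rw [hj]; simpa using hk⟩

theorem boxData_isBox : ∀ {n m : ℕ} (f : CubeMap m n) (g : Fin n → Bool ⊕ Fin m),
    BoxData f g → IsBox f := by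
  intro n
  induction n with
  | zero =>
    intro m f g ⟨he, hm, hs⟩
    have hm0 : m = 0 := by
      by_contra h
      obtain ⟨j, -⟩ := hs ⟨0, Nat.pos_of_ne_zero h⟩
      exact j.elim0
    subst hm0
    have : f = id := funext fun x => funext fun j => j.elim0
    rw [this]; exact IsBox.id 0
  | succ n ih =>
    intro m f g ⟨he, hm, hs⟩
    by_cases hC : ∃ j b, g j = Sum.inl b
    · obtain ⟨j, b, hj⟩ := hC
      set f' : CubeMap m n := fun x k => f x (j.succAbove k) with hf'
      have hbox' : IsBox f' := by
        refine ih f' (fun k => g (j.succAbove k)) ⟨fun x k => he x (j.succAbove k), ?_, ?_⟩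
        · intro k k' i i' hk hk'
          exact (Fin.succAbove_lt_succAbove_iff).symm.trans
            (hm (j.succAbove k) (j.succAbove k') i i' hk hk')
        · intro i
          obtain ⟨j', hj'⟩ := hs i
          have hne : j' ≠ j := by
            intro hEq; rw [hEq, hj] at hj'; exact absurd hj' (by simp)
          obtain ⟨k, hk⟩ := Fin.exists_succAbove_eq hne
          exact ⟨k, by show g (j.succAbove k) = Sum.inr i; rw [hk]; exact hj'⟩
      have hfe : f = (fun y : Fin n → Bool => (j.insertNth b y : Fin (n+1) → Bool)) ∘ f' := by
        funext x j'
        rw [Function.comp_apply]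
        beta_reduce
        by_cases h : j' = j
        · subst h
          rw [Fin.insertNth_apply_same, he x j', hj]; rfl
        · obtain ⟨k, hk⟩ := Fin.exists_succAbove_eq h
          rw [← hk, Fin.insertNth_apply_succAbove]
      rw [hfe]
      exact IsBox.comp hbox' (IsBox.coface j b)
    · push_neg at hC
      have hall : ∀ j, ∃ i, g j = Sum.inr i := by
        intro j
        rcases h : g j with b | i
        · exact absurd h (hC j b)
        · exact ⟨i, rfl⟩
      classical
      set e : Fin (n+1) → Fin m := fun j => Classical.choose (hall j) with hedef
      have hespec : ∀ j, g j = Sum.inr (e j) := fun j => Classical.choose_spec (hall j)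
      have hmono : StrictMono e := fun j j' hlt =>
        (hm j j' (e j) (e j') (hespec j) (hespec j')).mp hlt
      have hsurj : Function.Surjective e := by
        intro i
        obtain ⟨j, hj⟩ := hs i
        refine ⟨j, ?_⟩
        have := hespec j
        rw [hj] at this
        exact (Sum.inr.injEq _ _).mp this.symm
      have hcard : m = n + 1 := by
        have h1 : m ≤ n + 1 := by
          have := Fintype.card_le_of_surjective e hsurj
          simpa using this
        have h2 : n + 1 ≤ m := by
          have := Fintype.card_le_of_injective e hmono.injective
          simpa using this
        omega
      subst hcard
      have heid : e = id := by
        haveI inst : WellFoundedLT (Fin (n+1)) := inferInstance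
        have hid : StrictMono (id : Fin (n+1) → Fin (n+1)) := strictMono_id
        have hr : Set.range e = Set.range (id : Fin (n+1) → Fin (n+1)) := by
          rw [hsurj.range_eq, Set.range_id]
        exact (@StrictMono.range_inj (Fin (n+1)) (Fin (n+1)) _ _ inst e id hmono hid).mp hr
      have : f = id := by
        funext x j
        rw [he x j, hespec j, Sum.elim_inr, heid, id, id]
      rw [this]
      exact IsBox.id (n + 1)

/-- If `f` is cotransverse, `δ` is in the box category and `δ ∘ f` is in the box
category, then `f` is in the box category. -/
theorem stmt8 {m n p : ℕ} (f : CubeMap m n) (δ : CubeMap n p)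
    (hf : Cotransverse f) (hδ : IsBox δ) (hc : IsBox (δ ∘ f)) : IsBox f := by
  classical
  obtain ⟨gδ, hδe, hδm, hδs⟩ := isBox_boxData hδ
  obtain ⟨gh, hhe, hhm, hhs⟩ := isBox_boxData hc
  set J : Fin n → Fin p := fun k => Classical.choose (hδs k) with hJdef
  have hJspec : ∀ k, gδ (J k) = Sum.inr k := fun k => Classical.choose_spec (hδs k)
  refine boxData_isBox f (fun k => gh (J k)) ⟨?_, ?_, ?_⟩
  · intro x k
    have h1 : δ (f x) (J k) = f x k := by
      rw [hδe (f x) (J k), hJspec k]; rfl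
    have h2 : δ (f x) (J k) = Sum.elim id x (gh (J k)) := hhe x (J k)
    rw [← h1, h2]
  · intro k k' i i' hk hk'
    exact ((hδm (J k) (J k') k k' (hJspec k) (hJspec k')).symm).trans
      (hhm (J k) (J k') i i' hk hk')
  · intro i
    obtain ⟨j, hj⟩ := hhs i
    rcases h : gδ j with b | k
    · exfalso
      have hx : ∀ x : Fin m → Bool, x i = b := by
        intro x
        have h1 : δ (f x) j = b := by rw [hδe (f x) j, h]; rfl
        have h2 : δ (f x) j = x i := by
          have := hhe x j; rw [hj] at this; exact this
        rw [← h2, h1]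
      have ht := hx (fun _ => true)
      have hf' := hx (fun _ => false)
      rw [← hf'] at ht
      exact Bool.noConfusion ht
    · refine ⟨k, ?_⟩
      have hJk : J k = j := boxData_inj hδm (hJspec k) h
      show gh (J k) = Sum.inr i
      rw [hJk, hj]
end

section
/- Every cotransverse map f : {0,1}^m → {0,1}^n factors uniquely as f = φ ∘ ψ where ψ : {0,1}^m → {0,1}^m is cotransverse and φ : {0,1}^m → {0,1}^n belongs to the box category (is a composite of coface maps). -/
open scoped ENNReal

/-!
A cotransverse map sends covering pairs of the cube to covering pairs, so it preserves the
Hamming distance between comparable points. Hence `f ⊥` and `f ⊤` differ in exactly `m`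
coordinates `J`, and by monotonicity every `f x` agrees with `f ⊥` outside `J`. The maps of `□`
are exactly the maps `x ↦ extend e x b` with `e : Fin m → Fin n` strictly monotone, so `f`
factors through the one with `range e = J` and `b = f ⊥`, the first factor being `x ↦ f x ∘ e`.
Conversely, a cotransverse endomap of `{0,1}^m` fixes `⊥` and `⊤`, which forces `range e = J`
and `b = f ⊥` off `J` in any factorization; this gives uniqueness.
-/


open Function

section HammingBool

variable {ι : Type*} [Fintype ι]

theorem hammingDist_add_hammingDist_of_le {x y z : ι → Bool} (hxy : x ≤ y) (hyz : y ≤ z) :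
    hammingDist x y + hammingDist y z = hammingDist x z := by
  have key : ∀ a b c : Bool, a ≤ b → b ≤ c → (a ≠ b ∨ b ≠ c ↔ a ≠ c) ∧ ¬(a ≠ b ∧ b ≠ c) := by
    decide
  classical
  unfold hammingDist
  rw [← Finset.card_union_of_disjoint, ← Finset.filter_or]
  · simp only [fun i => (key _ _ _ (hxy i) (hyz i)).1]
  · exact Finset.disjoint_filter.2 fun i _ h h' => (key _ _ _ (hxy i) (hyz i)).2 ⟨h, h'⟩

theorem hammingDist_update_true [DecidableEq ι] {x : ι → Bool} {i : ι} (hi : x i = false) :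
    hammingDist x (update x i true) = 1 := by
  rw [hammingDist, Finset.card_eq_one]
  refine ⟨i, Finset.eq_singleton_iff_unique_mem.2 ⟨by simp [hi], fun j hj => ?_⟩⟩
  by_contra hji
  simp [update_of_ne hji] at hj

theorem eq_bot_and_eq_top_of_le_of_hammingDist_eq_card {x y : ι → Bool} (hxy : x ≤ y)
    (hd : hammingDist x y = Fintype.card ι) : x = ⊥ ∧ y = ⊤ := by
  have hlt : ∀ i, x i < y i := fun i =>
    (hxy i).lt_of_ne (Finset.card_filter_eq_iff.1 hd i (Finset.mem_univ i))
  exact ⟨funext fun i => (Bool.lt_iff.1 (hlt i)).1, funext fun i => (Bool.lt_iff.1 (hlt i)).2⟩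

end HammingBool

open Classical in
theorem dCube_def {n : ℕ} (x y : Fin n → Bool) :
    dCube x y = if x ≤ y then (hammingDist x y : ℝ≥0∞) else ⊤ := rfl

theorem dCube_eq_one_iff {n : ℕ} {x y : Fin n → Bool} :
    dCube x y = 1 ↔ x ≤ y ∧ hammingDist x y = 1 := by
  rw [dCube_def]
  split_ifs with h <;> simp [h]

theorem dCube_ne_top_iff {n : ℕ} {x y : Fin n → Bool} : dCube x y ≠ ⊤ ↔ x ≤ y := by
  rw [dCube_def]
  split_ifs with h <;> simp [h]

namespace Cotransverse

variable {m n : ℕ}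

theorem hammingDist_map_of_le {f : CubeMap m n} (hf : Cotransverse f) {x y : Fin m → Bool}
    (hxy : x ≤ y) : hammingDist (f x) (f y) = hammingDist x y := by
  induction hd : hammingDist x y generalizing x with
  | zero => rw [hammingDist_eq_zero.1 hd, hammingDist_self]
  | succ k ih =>
    obtain ⟨i, hi⟩ : ∃ i, x i ≠ y i := ne_iff.1 (hammingDist_ne_zero.1 (by omega))
    obtain ⟨hxi, hyi⟩ := Bool.lt_iff.1 ((hxy i).lt_of_ne hi)
    set x' := update x i true
    have hxx' : x ≤ x' := le_update_iff.2 ⟨Bool.le_true _, fun _ _ => le_rfl⟩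
    have hx'y : x' ≤ y := update_le_iff.2 ⟨hyi.ge, fun j _ => hxy j⟩
    have hcover : hammingDist (f x) (f x') = 1 :=
      (dCube_eq_one_iff.1 (hf.2 _ _ (dCube_eq_one_iff.2 ⟨hxx', hammingDist_update_true hxi⟩))).2
    have hx'y_dist : hammingDist x' y = k := by
      have := hammingDist_add_hammingDist_of_le hxx' hx'y
      rw [hammingDist_update_true hxi, hd] at this
      omega
    rw [← hammingDist_add_hammingDist_of_le (hf.1.monotone hxx') (hf.1.monotone hx'y), hcover,
      ih hx'y hx'y_dist, add_comm]

theorem hammingDist_map_bot_top {f : CubeMap m n} (hf : Cotransverse f) :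
    hammingDist (f ⊥) (f ⊤) = m := by
  rw [hf.hammingDist_map_of_le bot_le]
  simp [hammingDist]

theorem map_bot_and_map_top {ψ : CubeMap m m} (hψ : Cotransverse ψ) : ψ ⊥ = ⊥ ∧ ψ ⊤ = ⊤ :=
  eq_bot_and_eq_top_of_le_of_hammingDist_eq_card (hψ.1.monotone bot_le)
    (by rw [hψ.hammingDist_map_bot_top, Fintype.card_fin])

theorem of_comp {p : ℕ} {φ : CubeMap n p} {ψ : CubeMap m n}
    (hφ : ∀ x y, dCube (φ x) (φ y) = dCube x y) (h : Cotransverse (φ ∘ ψ)) :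
    Cotransverse ψ := by
  have hle : ∀ x y, φ x ≤ φ y ↔ x ≤ y := fun x y => by
    rw [← dCube_ne_top_iff, ← dCube_ne_top_iff, hφ]
  refine ⟨fun x y hxy => ?_, fun x y hxy => hφ _ _ ▸ h.2 x y hxy⟩
  have := h.1 hxy
  rw [comp_apply, comp_apply, lt_iff_le_not_ge, hle, hle] at this
  exact lt_iff_le_not_ge.2 this

end Cotransverse

theorem Monotone.apply_eq_apply_bot {α ι β : Type*} [Preorder α] [BoundedOrder α]
    [PartialOrder β] {f : α → ι → β} (hf : Monotone f) (x : α) {j : ι} (hj : f ⊥ j = f ⊤ j) :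
    f x j = f ⊥ j :=
  le_antisymm (hj ▸ hf le_top j) (hf bot_le j)

noncomputable def extendCube {m n : ℕ} (e : Fin m → Fin n) (b : Fin n → Bool) : CubeMap m n :=
  fun x => extend e x b

section ExtendCube

variable {m n : ℕ} {e : Fin m → Fin n}

theorem extendCube_apply_comp (he : Injective e) (b : Fin n → Bool) (x : Fin m → Bool) :
    extendCube e b x ∘ e = x :=
  extend_comp he x b

theorem extendCube_extendCube_apply (he : Injective e) (b : Fin n → Bool) (x : Fin m → Bool) :
    extendCube e (extendCube e b x) = extendCube e b := by
  funext y j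
  by_cases hj : ∃ i, e i = j
  · obtain ⟨i, rfl⟩ := hj
    simp only [extendCube, he.extend_apply]
  · simp only [extendCube, extend_apply' _ _ _ hj]

theorem extendCube_le_extendCube_iff (he : Injective e) (b : Fin n → Bool)
    {x y : Fin m → Bool} : extendCube e b x ≤ extendCube e b y ↔ x ≤ y := by
  refine ⟨fun h i => ?_, fun h j => ?_⟩
  · simpa only [extendCube, he.extend_apply] using h (e i)
  · by_cases hj : ∃ i, e i = j
    · obtain ⟨i, rfl⟩ := hj
      simpa only [extendCube, he.extend_apply] using h i
    · simp only [extendCube, extend_apply' _ _ _ hj, le_refl]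

theorem hammingDist_extendCube (he : Injective e) (b : Fin n → Bool) (x y : Fin m → Bool) :
    hammingDist (extendCube e b x) (extendCube e b y) = hammingDist x y := by
  classical
  have himage : ({j | extendCube e b x j ≠ extendCube e b y j} : Finset (Fin n)) =
      Finset.image e {i | x i ≠ y i} := by
    ext j
    simp only [Finset.mem_filter, Finset.mem_univ, true_and, Finset.mem_image]
    by_cases hj : ∃ i, e i = j
    · obtain ⟨i, rfl⟩ := hj
      simp only [extendCube, he.extend_apply, he.eq_iff, exists_eq_right]
    · simp only [extendCube, extend_apply' _ _ _ hj, ne_eq, not_true_eq_false, false_iff]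
      exact fun ⟨i, _, hi⟩ => hj ⟨i, hi⟩
  rw [hammingDist, hammingDist, himage, Finset.card_image_of_injective _ he]

theorem dCube_extendCube (he : Injective e) (b : Fin n → Bool) (x y : Fin m → Bool) :
    dCube (extendCube e b x) (extendCube e b y) = dCube x y := by
  rw [dCube_def, dCube_def, extendCube_le_extendCube_iff he, hammingDist_extendCube he]

theorem eq_extendCube_comp (he : Injective e) {f : CubeMap m n} {b : Fin n → Bool}
    (hf : ∀ x, ∀ j ∉ Set.range e, f x j = b j) : f = extendCube e b ∘ fun x => f x ∘ e := by
  funext x j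
  by_cases hj : ∃ i, e i = j
  · obtain ⟨i, rfl⟩ := hj
    simp only [comp_apply, extendCube, he.extend_apply]
  · simp only [comp_apply, extendCube, extend_apply' _ _ _ hj, hf x j hj]

theorem eq_comp_of_eq_extendCube_comp {k : ℕ} {ψ : CubeMap k m} {f : CubeMap k n}
    {b : Fin n → Bool} (he : Injective e) (hf : f = extendCube e b ∘ ψ) :
    ψ = fun x => f x ∘ e := by
  funext x
  rw [hf, comp_apply, extendCube_apply_comp he]

theorem extendCube_comp {p : ℕ} {e' : Fin n → Fin p} (he' : Injective e') (he : Injective e)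
    (b : Fin p → Bool) : extendCube (e' ∘ e) b = extendCube e' b ∘ extendCube e (b ∘ e') :=
  funext fun x => he.extend_comp he' x b

theorem extendCube_succAbove (j : Fin (n + 1)) (b : Fin (n + 1) → Bool) :
    extendCube j.succAbove b = fun x => (j.insertNth (b j) x : Fin (n + 1) → Bool) := by
  funext x
  refine (Fin.insertNth_eq_iff.2 ⟨?_, ?_⟩).symm
  · exact (extend_apply' _ _ _ fun ⟨i, hi⟩ => Fin.succAbove_ne j i hi).symm
  · exact (extendCube_apply_comp Fin.succAbove_right_injective b x).symm

end ExtendCube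

theorem isBox_extendCube_of_surjective {m n : ℕ} {e : Fin m → Fin n} (he : StrictMono e)
    (hsurj : Surjective e) (b : Fin n → Bool) : IsBox (extendCube e b) := by
  obtain rfl : m = n := le_antisymm (Fin.le_of_injective e he.injective)
    (Fin.le_of_surjective e hsurj)
  obtain rfl : e = id := Set.range_injOn_strictMono he strictMono_id (by simp [hsurj.range_eq])
  have hid : extendCube id b = id := funext fun x => extend_id x b
  exact hid ▸ IsBox.id m

theorem isBox_extendCube {m n : ℕ} {e : Fin m → Fin n} (he : StrictMono e) (b : Fin n → Bool) :
    IsBox (extendCube e b) := by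
  induction n generalizing m with
  | zero => exact isBox_extendCube_of_surjective he (fun j => j.elim0) b
  | succ n ih =>
    by_cases hsurj : Surjective e
    · exact isBox_extendCube_of_surjective he hsurj b
    obtain ⟨j, hj⟩ := not_forall.1 hsurj
    choose e' he' using fun i => Fin.exists_succAbove_eq fun h : e i = j => hj ⟨i, h⟩
    obtain rfl : e = j.succAbove ∘ e' := funext fun i => (he' i).symm
    have he'mono : StrictMono e' := fun i i' h => Fin.succAbove_lt_succAbove_iff.1 (he h)
    rw [extendCube_comp Fin.succAbove_right_injective he'mono.injective, extendCube_succAbove]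
    exact (ih he'mono _).comp (IsBox.coface j (b j))

theorem IsBox.exists_eq_extendCube {m n : ℕ} {φ : CubeMap m n} (h : IsBox φ) :
    ∃ e : Fin m → Fin n, StrictMono e ∧ ∃ b, φ = extendCube e b := by
  induction h with
  | id n => exact ⟨_root_.id, strictMono_id, ⊥, funext fun x => (extend_id x ⊥).symm⟩
  | coface i a =>
    exact ⟨i.succAbove, Fin.strictMono_succAbove i, fun _ => a,
      (extendCube_succAbove i fun _ => a).symm⟩
  | comp _ _ ih ih' =>
    obtain ⟨e, he, b, rfl⟩ := ih
    obtain ⟨e', he', b', rfl⟩ := ih'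
    refine ⟨e' ∘ e, he'.comp he, extendCube e' b' b, ?_⟩
    rw [extendCube_comp he'.injective he.injective, extendCube_apply_comp he'.injective,
      extendCube_extendCube_apply he'.injective]

namespace Cotransverse

variable {m n : ℕ} {ψ : CubeMap m m} {f : CubeMap m n} {e : Fin m → Fin n} {b : Fin n → Bool}

theorem range_eq_of_eq_extendCube_comp (hψ : Cotransverse ψ) (he : Injective e)
    (hf : f = extendCube e b ∘ ψ) : Set.range e = {j | f ⊥ j ≠ f ⊤ j} := by
  obtain ⟨hbot, htop⟩ := hψ.map_bot_and_map_top
  ext j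
  simp only [hf, comp_apply, hbot, htop, Set.mem_ofPred_eq]
  by_cases hj : ∃ i, e i = j
  · obtain ⟨i, rfl⟩ := hj
    simp [extendCube, he.extend_apply]
  · simp only [extendCube, extend_apply' _ _ _ hj, ne_eq, not_true_eq_false, iff_false]
    exact hj

theorem extendCube_eq_of_eq_extendCube_comp (hψ : Cotransverse ψ) (he : Injective e)
    (hf : f = extendCube e b ∘ ψ) : extendCube e b = extendCube e (f ⊥) := by
  rw [hf, comp_apply, hψ.map_bot_and_map_top.1, extendCube_extendCube_apply he]

end Cotransverse

/-- Every cotransverse map `f : {0,1}^m → {0,1}^n` factors uniquely as `φ ∘ ψ`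
with `ψ : {0,1}^m → {0,1}^m` cotransverse and `φ` in the box category. -/
theorem stmt9 {m n : ℕ} (f : CubeMap m n) (hf : Cotransverse f) :
    ∃! p : CubeMap m m × CubeMap m n,
      Cotransverse p.1 ∧ IsBox p.2 ∧ f = p.2 ∘ p.1 := by
  classical
  let e := Finset.orderEmbOfFin {j | f ⊥ j ≠ f ⊤ j} hf.hammingDist_map_bot_top
  have hrange : Set.range e = {j | f ⊥ j ≠ f ⊤ j} := by simp [e]
  have hfac : f = extendCube e (f ⊥) ∘ fun x => f x ∘ e :=
    eq_extendCube_comp e.injective fun x j hj =>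
      hf.1.monotone.apply_eq_apply_bot x (by simpa [hrange] using hj)
  refine ⟨(fun x => f x ∘ e, extendCube e (f ⊥)), ⟨?_, isBox_extendCube e.strictMono _, hfac⟩, ?_⟩
  · exact Cotransverse.of_comp (dCube_extendCube e.injective _) (hfac ▸ hf)
  rintro ⟨ψ, φ⟩ ⟨hψ, hφ, hfψ⟩
  dsimp only at hψ hφ hfψ
  obtain ⟨e', he', b, rfl⟩ := hφ.exists_eq_extendCube
  obtain rfl : e' = e := Set.range_injOn_strictMono he' e.strictMono
    ((hψ.range_eq_of_eq_extendCube_comp he'.injective hfψ).trans hrange.symm)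
  rw [hψ.extendCube_eq_of_eq_extendCube_comp e.injective hfψ,
    eq_comp_of_eq_extendCube_comp e.injective hfψ]
end

section
/- The box category □ is thick: for every map f ∈ □, in the unique factorization f = φ∘ψ with φ ∈ □ and ψ cotransverse of equal source and target dimension, the map ψ is the identity (and in particular ψ ∈ □). -/
open scoped ENNReal

/-! A map of cubes is the inclusion of a face if it copies the input coordinates to the
output coordinates `u k` and is constant on all other output coordinates; every map of `□`
is of this form. Given `f = φ ∘ ψ` with `f, φ ∈ □`, the coordinates of `ψ x` are coordinates
of `f x`, namely those at the positions `v i` copied by `φ`. Since `f` (hence `ψ`) is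
injective, every position `u k` copied by `f` must be among them, so `u` and `v` have the same
range; being strictly monotone, `u = v`, and then `ψ x i = f x (u i) = x i`. -/

def IsFaceAlong {m n : ℕ} (f : CubeMap m n) (u : Fin m → Fin n) : Prop :=
  (∀ x k, f x (u k) = x k) ∧ ∀ j ∉ Set.range u, ∀ x y, f x j = f y j

namespace IsFaceAlong

variable {m n : ℕ} {f : CubeMap m n} {u : Fin m → Fin n}

lemma apply_eq_of_eqOn_preimage (hf : IsFaceAlong f u) {x y : Fin m → Bool} {j : Fin n}
    (hxy : ∀ k, u k = j → x k = y k) : f x j = f y j := by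
  by_cases hj : j ∈ Set.range u
  · obtain ⟨k, rfl⟩ := hj
    rw [hf.1, hf.1, hxy k rfl]
  · exact hf.2 j hj x y

lemma injective (hf : IsFaceAlong f u) : Function.Injective f := fun x y hxy =>
  funext fun k => by rw [← hf.1 x k, ← hf.1 y k, hxy]

lemma comp {p : ℕ} {g : CubeMap n p} {v : Fin n → Fin p} (hf : IsFaceAlong f u)
    (hg : IsFaceAlong g v) : IsFaceAlong (g ∘ f) (v ∘ u) := by
  refine ⟨fun x k => by simp only [Function.comp_apply, hg.1, hf.1], fun j hj x y => ?_⟩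
  refine hg.apply_eq_of_eqOn_preimage fun l hl => hf.2 l (fun ⟨k, hk⟩ => hj ⟨k, ?_⟩) x y
  rw [Function.comp_apply, hk, hl]

lemma range_subset_of_comp {ψ : CubeMap m m} {φ : CubeMap m n} {v : Fin m → Fin n}
    (hf : IsFaceAlong (φ ∘ ψ) u) (hφ : IsFaceAlong φ v) (hψ : Function.Injective ψ) :
    Set.range u ⊆ Set.range v := by
  rintro _ ⟨j, rfl⟩
  by_contra hj
  let x : Fin m → Bool := fun _ => false
  have hx : x ≠ Function.update x j true := fun h => by
    simpa [x] using congrFun h j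
  refine hx (hψ (funext fun i => ?_))
  rw [← hφ.1 (ψ x) i, ← hφ.1 (ψ (Function.update x j true)) i]
  refine hf.apply_eq_of_eqOn_preimage fun k hk => ?_
  have hkj : k ≠ j := by rintro rfl; exact hj ⟨i, hk.symm⟩
  rw [Function.update_of_ne hkj]

end IsFaceAlong

lemma coface_isFaceAlong {n : ℕ} (i : Fin (n + 1)) (a : Bool) :
    IsFaceAlong (fun x : Fin n → Bool => (i.insertNth a x : Fin (n + 1) → Bool))
      i.succAbove := by
  refine ⟨fun x k => by simp only [Fin.insertNth_apply_succAbove], fun j hj x y => ?_⟩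
  obtain rfl : j = i := by
    by_contra hne
    exact hj (Fin.exists_succAbove_eq hne)
  simp only [Fin.insertNth_apply_same]

lemma IsBox.exists_isFaceAlong {m n : ℕ} {f : CubeMap m n} (hf : IsBox f) :
    ∃ u : Fin m → Fin n, StrictMono u ∧ IsFaceAlong f u := by
  induction hf with
  | id n => exact ⟨_root_.id, strictMono_id, fun _ _ => rfl, fun j hj => absurd ⟨j, rfl⟩ hj⟩
  | coface i a => exact ⟨i.succAbove, Fin.strictMono_succAbove i, coface_isFaceAlong i a⟩
  | comp _ _ ihf ihg =>
    obtain ⟨u, hu, hfu⟩ := ihf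
    obtain ⟨v, hv, hgv⟩ := ihg
    exact ⟨v ∘ u, hv.comp hu, hfu.comp hgv⟩

lemma StrictMono.eq_of_range_subset {m n : ℕ} {u v : Fin m → Fin n} (hu : StrictMono u)
    (hv : StrictMono v) (huv : Set.range u ⊆ Set.range v) : u = v := by
  refine (hu.range_inj hv).1 (Set.eq_of_subset_of_ncard_le huv ?_)
  rw [Set.ncard_range_of_injective hu.injective, Set.ncard_range_of_injective hv.injective]

theorem stmt13_general {m n : ℕ} (f : CubeMap m n) (ψ : CubeMap m m) (φ : CubeMap m n)
    (hf : IsBox f) (hφ : IsBox φ) (hfac : f = φ ∘ ψ) :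
    ψ = id := by
  subst hfac
  obtain ⟨u, hu, hfu⟩ := hf.exists_isFaceAlong
  obtain ⟨v, hv, hφv⟩ := hφ.exists_isFaceAlong
  have hψ : Function.Injective ψ := hfu.injective.of_comp
  obtain rfl : u = v := hu.eq_of_range_subset hv (hfu.range_subset_of_comp hφv hψ)
  funext x i
  rw [← hφv.1 (ψ x) i]
  exact hfu.1 x i

/-- The box category is thick: for `f ∈ □`, in any factorization `f = φ ∘ ψ`
with `φ ∈ □` and `ψ` a cotransverse endomap, `ψ` is the identity. -/
theorem stmt13 {m n : ℕ} (f : CubeMap m n) (ψ : CubeMap m m) (φ : CubeMap m n)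
    (hf : IsBox f) (hψ : Cotransverse ψ) (hφ : IsBox φ) (hfac : f = φ ∘ ψ) :
    ψ = id :=
  stmt13_general f ψ φ hf hφ hfac
end

section
/- The transverse box category Ŝ is thick: if f : {0,1}^m → {0,1}^n lies in Ŝ and f = δ∘g is the unique factorization with δ ∈ □ and g : {0,1}^m → {0,1}^m cotransverse, then g ∈ Ŝ. -/
open scoped ENNReal

/-- Membership in the transverse box category `□̂`: cotransverse maps `φ` such that
`φ ∘ δ ∈ □` for every `δ ∈ □` with `φ ∘ δ` injective. -/
def InHatBox {m n : ℕ} (f : CubeMap m n) : Prop :=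
  Cotransverse f ∧ ∀ (p : ℕ) (δ : CubeMap p m), IsBox δ →
    Function.Injective (f ∘ δ) → IsBox (f ∘ δ)

/-!
A map of `□` is the same thing as a face inclusion: it copies the coordinates of its source
into an increasing set of coordinates `s` of its target and is constant elsewhere. Such a map `δ`
is injective and has the retraction `y ↦ y ∘ s`, so `δ ∘ h ∈ □` forces `h ∈ □`. Given `δ' ∈ □`
with `g ∘ δ'` injective, `f ∘ δ' = δ ∘ (g ∘ δ')` is injective, hence in `□` since `f ∈ □̂`,
and cancelling `δ` gives `g ∘ δ' ∈ □`.
-/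

def IsFaceInclusion {m n : ℕ} (s : Fin m → Fin n) (f : CubeMap m n) : Prop :=
  StrictMono s ∧ (∀ x i, f x (s i) = x i) ∧ ∀ j ∉ Set.range s, ∀ x y, f x j = f y j

namespace IsFaceInclusion

variable {m n p : ℕ} {s : Fin m → Fin n} {f : CubeMap m n}

lemma injective (hf : IsFaceInclusion s f) : Function.Injective f := fun x y hxy =>
  funext fun i => by rw [← hf.2.1 x i, ← hf.2.1 y i, hxy]

lemma id (n : ℕ) : IsFaceInclusion _root_.id (@_root_.id (Fin n → Bool)) :=
  ⟨strictMono_id, fun _ _ => rfl, fun j hj => absurd ⟨j, rfl⟩ hj⟩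

lemma coface (i : Fin (n + 1)) (a : Bool) :
    IsFaceInclusion i.succAbove (fun x : Fin n → Bool => (i.insertNth a x : Fin (n + 1) → Bool)) := by
  refine ⟨Fin.strictMono_succAbove i, fun x t => Fin.insertNth_apply_succAbove .., ?_⟩
  intro j hj x y
  obtain rfl : j = i := by
    by_contra hne
    exact hj (Fin.exists_succAbove_eq hne)
  simp

lemma comp {t : Fin n → Fin p} {g : CubeMap n p} (hf : IsFaceInclusion s f)
    (hg : IsFaceInclusion t g) : IsFaceInclusion (t ∘ s) (g ∘ f) := by
  refine ⟨hg.1.comp hf.1, fun x i => by simp [hg.2.1, hf.2.1], ?_⟩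
  intro j hj x y
  by_cases hjt : j ∈ Set.range t
  · obtain ⟨k, rfl⟩ := hjt
    simp only [Function.comp_apply, hg.2.1]
    exact hf.2.2 k (fun ⟨i, hi⟩ => hj ⟨i, by simp [hi]⟩) x y
  · exact hg.2.2 j hjt _ _

lemma isBox_of_surjective (hf : IsFaceInclusion s f) (hs : Function.Surjective s) : IsBox f := by
  obtain rfl : m = n := Fin.equiv_iff_eq.mp ⟨Equiv.ofBijective s ⟨hf.1.injective, hs⟩⟩
  obtain rfl : s = _root_.id :=
    (hf.1.range_inj strictMono_id).mp (by rw [hs.range_eq, Set.range_id])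
  obtain rfl : f = _root_.id := funext fun x => funext (hf.2.1 x)
  exact IsBox.id m

lemma exists_eq_coface_comp {s : Fin m → Fin (n + 1)} {f : CubeMap m (n + 1)}
    (hf : IsFaceInclusion s f) {j : Fin (n + 1)} (hj : j ∉ Set.range s) :
    ∃ (s' : Fin m → Fin n) (f' : CubeMap m n) (a : Bool), IsFaceInclusion s' f' ∧
      f = (fun y : Fin n → Bool => (j.insertNth a y : Fin (n + 1) → Bool)) ∘ f' := by
  have hs : ∀ i, ∃ t, j.succAbove t = s i := fun i => Fin.exists_succAbove_eq fun h => hj ⟨i, h⟩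
  choose s' hs' using hs
  refine ⟨s', fun x => j.removeNth (f x), f (fun _ => false) j, ⟨?_, ?_, ?_⟩, ?_⟩
  · exact fun i i' h => (Fin.strictMono_succAbove j).lt_iff_lt.mp (by rw [hs', hs']; exact hf.1 h)
  · intro x i
    simp [Fin.removeNth_apply, hs', hf.2.1]
  · intro t ht x y
    refine hf.2.2 _ (fun ⟨i, hi⟩ => ht ⟨i, ?_⟩) x y
    exact (Fin.strictMono_succAbove j).injective (by rw [hs', hi])
  · funext x
    rw [Function.comp_apply, ← hf.2.2 j hj x, Fin.insertNth_self_removeNth]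

theorem isBox (hf : IsFaceInclusion s f) : IsBox f := by
  induction n generalizing m with
  | zero => exact hf.isBox_of_surjective fun j => j.elim0
  | succ n ih =>
    by_cases hs : Function.Surjective s
    · exact hf.isBox_of_surjective hs
    · obtain ⟨j, hj⟩ := not_forall.mp hs
      obtain ⟨s', f', a, hf', rfl⟩ := hf.exists_eq_coface_comp hj
      exact (ih hf').comp (IsBox.coface j a)

/-- The retraction `y ↦ y ∘ t` of `δ` exhibits `h` as a face inclusion along `t⁻¹ ∘ u`. -/
lemma of_comp {t : Fin n → Fin p} {u : Fin m → Fin p} {δ : CubeMap n p} {h : CubeMap m n}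
    (hδ : IsFaceInclusion t δ) (hk : IsFaceInclusion u (δ ∘ h)) : ∃ s, IsFaceInclusion s h := by
  have hut : ∀ i, ∃ k, t k = u i := by
    intro i
    by_contra hi
    have hconst := hδ.2.2 (u i) hi (h fun _ => false) (h fun _ => true)
    have hfalse := hk.2.1 (fun _ => false) i
    have htrue := hk.2.1 (fun _ => true) i
    simp only [Function.comp_apply] at hfalse htrue
    exact Bool.false_ne_true (hfalse ▸ htrue ▸ hconst)
  choose s hs using hut
  have retract : ∀ x k, h x k = δ (h x) (t k) := fun x k => (hδ.2.1 (h x) k).symm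
  refine ⟨s, fun i i' hii => hδ.1.lt_iff_lt.mp (by rw [hs, hs]; exact hk.1 hii), ?_, ?_⟩
  · intro x i
    rw [retract, hs]
    exact hk.2.1 x i
  · intro k hk' x y
    rw [retract, retract]
    exact hk.2.2 (t k) (fun ⟨i, hi⟩ => hk' ⟨i, hδ.1.injective (by rw [hs, hi])⟩) x y

end IsFaceInclusion

namespace IsBox

variable {m n p : ℕ}

lemma exists_isFaceInclusion {f : CubeMap m n} (hf : IsBox f) : ∃ s, IsFaceInclusion s f := by
  induction hf with
  | id n => exact ⟨_, IsFaceInclusion.id n⟩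
  | coface i a => exact ⟨_, IsFaceInclusion.coface i a⟩
  | comp _ _ ihf ihg =>
    obtain ⟨s, hs⟩ := ihf
    obtain ⟨t, ht⟩ := ihg
    exact ⟨_, hs.comp ht⟩

lemma injective {f : CubeMap m n} (hf : IsBox f) : Function.Injective f :=
  let ⟨_, hs⟩ := hf.exists_isFaceInclusion
  hs.injective

lemma of_comp {δ : CubeMap n p} {h : CubeMap m n} (hδ : IsBox δ) (hk : IsBox (δ ∘ h)) :
    IsBox h := by
  obtain ⟨t, ht⟩ := hδ.exists_isFaceInclusion
  obtain ⟨u, hu⟩ := hk.exists_isFaceInclusion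
  obtain ⟨s, hs⟩ := ht.of_comp hu
  exact hs.isBox

end IsBox

/-- The transverse box category `□̂` is thick: if `f ∈ □̂` and `f = δ ∘ g` with
`δ ∈ □` and `g` a cotransverse endomap, then `g ∈ □̂`. -/
theorem stmt15 {m n : ℕ} (f : CubeMap m n) (g : CubeMap m m) (δ : CubeMap m n)
    (hf : InHatBox f) (hg : Cotransverse g) (hδ : IsBox δ) (hfac : f = δ ∘ g) :
    InHatBox g := by
  refine ⟨hg, fun p δ' hδ' hinj => ?_⟩
  have hassoc : f ∘ δ' = δ ∘ (g ∘ δ') := by rw [hfac]; rfl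
  have hbox : IsBox (f ∘ δ') := hf.2 p δ' hδ' (hassoc ▸ hδ.injective.comp hinj)
  exact hδ.of_comp (hassoc ▸ hbox)
end

section
/- For cotransverse f : {0,1}^n → {0,1}^n, define T(f) : [0,1]^n → [0,1]^n by T(f)ᵢ(x) = max over ε ∈ fᵢ⁻¹(1) of min{x_k : ε_k = 1}, where fᵢ is the i-th component of f. Then T(f) restricted to {0,1}^n equals f, and T(g∘f) = T(g)∘T(f) for cotransverse f,g, i.e., T is functorial. -/
open scoped ENNReal

open Classical in
/-- The topological extension `T(f) : [0,1]^n → [0,1]^n` of a cotransverse endomap,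
defined by `T(f)ᵢ(x) = max over ε ∈ fᵢ⁻¹(1) of min { x_k : ε_k = 1 }`. -/
noncomputable def Tmap {n : ℕ} (f : CubeMap n n)
    (x : Fin n → unitInterval) : Fin n → unitInterval :=
  fun i =>
    (Finset.univ.filter fun ε : Fin n → Bool => f ε i = true).sup
      (fun ε => (Finset.univ.filter fun k => ε k = true).inf (fun k => x k))

/-- The inclusion `{0,1} ⊆ [0,1]`. -/
def boolToI (b : Bool) : unitInterval := if b then 1 else 0

/-! Threshold decomposition: for `⊥ < c`, the Boolean vector `k ↦ (c ≤ x k)` of `T(f) x` is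
`f` applied to that of `x`, because `fᵢ⁻¹(1)` is an upper set when `f` is monotone. A point of
`[0,1]^n` is determined by all its thresholds, so both claims reduce to identities between maps
of binary cubes. -/

open Finset

section Threshold

variable {ι α : Type*} [LinearOrder α]

def threshold (c : α) (x : ι → α) : ι → Bool := fun k => decide (c ≤ x k)

lemma eq_of_forall_bot_lt_le_iff [OrderBot α] {a b : α}
    (h : ∀ c, ⊥ < c → (c ≤ a ↔ c ≤ b)) : a = b := by
  refine eq_of_forall_le_iff fun c => ?_
  rcases eq_bot_or_bot_lt c with rfl | hc
  · simp
  · exact h c hc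

lemma eq_of_forall_bot_lt_threshold_eq [OrderBot α] {x y : ι → α}
    (h : ∀ c, ⊥ < c → threshold c x = threshold c y) : x = y := by
  funext k
  refine eq_of_forall_bot_lt_le_iff fun c hc => ?_
  simpa [threshold] using congrFun (h c hc) k

variable [Fintype ι] [BoundedOrder α]

lemma le_sup_inf_iff_threshold_mem {S : Finset (ι → Bool)} (hS : IsUpperSet (S : Set (ι → Bool)))
    (x : ι → α) {c : α} (hc : ⊥ < c) :
    c ≤ S.sup (fun ε => (univ.filter fun k => ε k = true).inf x) ↔ threshold c x ∈ S := by
  rw [Finset.le_sup_iff hc]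
  constructor
  · rintro ⟨ε, hεS, hε⟩
    refine hS (fun k => Bool.le_iff_imp.2 fun hk => ?_) hεS
    exact decide_eq_true (Finset.le_inf_iff.1 hε k (mem_filter.2 ⟨mem_univ k, hk⟩))
  · refine fun h => ⟨threshold c x, h, Finset.le_inf fun k hk => ?_⟩
    exact of_decide_eq_true (mem_filter.1 hk).2

end Threshold

lemma threshold_Tmap {n : ℕ} {f : CubeMap n n} (hf : Monotone f) (x : Fin n → unitInterval)
    {c : unitInterval} (hc : ⊥ < c) : threshold c (Tmap f x) = f (threshold c x) := by
  funext i
  have hS : IsUpperSet (↑(univ.filter fun ε => f ε i = true) : Set (Fin n → Bool)) := by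
    simp only [coe_filter, mem_univ, true_and]
    exact isUpperSet_setOfPred.2 fun ε δ hεδ hε => Bool.eq_true_of_true_le (hε ▸ hf hεδ i)
  have key := le_sup_inf_iff_threshold_mem hS x hc
  simp only [mem_filter, mem_univ, true_and] at key
  rw [threshold, Bool.eq_iff_iff, decide_eq_true_iff]
  exact key

lemma threshold_boolToI {n : ℕ} (x : Fin n → Bool) {c : unitInterval} (hc : ⊥ < c) :
    threshold c (fun k => boolToI (x k)) = x := by
  have hc0 : c ≠ 0 := hc.ne'
  funext k
  cases hk : x k <;> simp [threshold, boolToI, hk, hc0, unitInterval.le_one']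

/-- `T(f)` restricted to the binary cube equals `f`, and `T` is functorial:
`T(g ∘ f) = T(g) ∘ T(f)` for cotransverse `f`, `g`. -/
theorem stmt18 {n : ℕ} (f g : CubeMap n n)
    (hf : Cotransverse f) (hg : Cotransverse g) :
    (∀ x : Fin n → Bool, Tmap f (fun k => boolToI (x k)) = fun i => boolToI (f x i)) ∧
    Tmap (g ∘ f) = Tmap g ∘ Tmap f := by
  have hf' := hf.1.monotone
  have hg' := hg.1.monotone
  refine ⟨fun x => ?_, funext fun x => ?_⟩ <;>
    refine eq_of_forall_bot_lt_threshold_eq fun c hc => ?_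
  · rw [threshold_Tmap hf' _ hc, threshold_boolToI _ hc, threshold_boolToI _ hc]
  · rw [Function.comp_apply, threshold_Tmap (hg'.comp hf') _ hc, threshold_Tmap hg' _ hc,
      threshold_Tmap hf' _ hc, Function.comp_apply]
end
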